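/- Let A be a finite nonempty set of acts and let a ∈ A satisfy MmL({a},A) ≤ MmL({b},A) for every b ∈ A. Then a ∈ D_M(A). -/

import Mathlib

open Finset

/-- Upper expectation of `f` with respect to the set `P` of probability mass functions:
`Ē(f) = sup_{p ∈ P} ∑ ω, p ω * f ω` (the sup is attained when `P` is nonempty and compact). -/
noncomputable def upperExp {Ω : Type*} [Fintype Ω] (P : Set (Ω → ℝ)) (f : Ω → ℝ) : ℝ :=
  sSup ((fun p => ∑ ω, p ω * f ω) '' P)

/-- `P` is a credal set: a nonempty compact set of probability mass functions on `Ω`. -/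
def IsCredal {Ω : Type*} [Fintype Ω] (P : Set (Ω → ℝ)) : Prop :=
  P.Nonempty ∧ IsCompact P ∧ ∀ p ∈ P, (∀ ω, 0 ≤ p ω) ∧ ∑ ω, p ω = 1

/-- `a ≻ a'`: act `a` dominates act `a'`, i.e. `Ē(a' − a) < 0` (equivalently `E̲(a − a') > 0`). -/
def dominates {Ω : Type*} [Fintype Ω] (P : Set (Ω → ℝ)) (a a' : Ω → ℝ) : Prop :=
  upperExp P (a' - a) < 0

/-- `a` is a maximal act of `A`: `a ∈ A` and no `a' ∈ A` dominates `a`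
(membership in `D_M(A)`). -/
def maximalIn {Ω : Type*} [Fintype Ω] (P : Set (Ω → ℝ)) (A : Finset (Ω → ℝ))
    (a : Ω → ℝ) : Prop :=
  a ∈ A ∧ ∀ a' ∈ A, ¬ dominates P a' a

/-- `mML(S, A) = min_{a ∈ S} max_{a' ∈ A ∖ S} Ē(a' − a)`, valued in `EReal` so that the
maximum over the empty set is `−∞` (hence `mML(A, A) = −∞` when `S` is nonempty). -/
noncomputable def mML {Ω : Type*} [Fintype Ω] [DecidableEq (Ω → ℝ)]
    (P : Set (Ω → ℝ)) (S A : Finset (Ω → ℝ)) : EReal :=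
  S.inf fun a => (A \ S).sup fun a' => ((upperExp P (a' - a) : ℝ) : EReal)

/-- `MmL(S, A) = max_{a' ∈ A ∖ S} min_{a ∈ S} Ē(a' − a)`, valued in `EReal` so that the
maximum over the empty set is `−∞` (hence `MmL(A, A) = −∞`). -/
noncomputable def MmL {Ω : Type*} [Fintype Ω] [DecidableEq (Ω → ℝ)]
    (P : Set (Ω → ℝ)) (S A : Finset (Ω → ℝ)) : EReal :=
  (A \ S).sup fun a' => S.inf fun a => ((upperExp P (a' - a) : ℝ) : EReal)

/-!
If `a'` dominates `a`, i.e. `Ē(a - a') < 0`, then subadditivity of `Ē` gives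
`Ē(c - a') ≤ Ē(c - a) + Ē(a - a') < Ē(c - a)` for every act `c`, and `Ē(a' - a) > 0`.
So every loss in `MmL({a'}, A)` is strictly below `MmL({a}, A)`, contradicting the minimality
of `MmL({a}, A)`.
-/

section UpperExpectation

variable {Ω : Type*} [Fintype Ω] {P : Set (Ω → ℝ)}

lemma bddAbove_image_expectation (hP : IsCompact P) (f : Ω → ℝ) :
    BddAbove ((fun p => ∑ ω, p ω * f ω) '' P) :=
  (hP.image (by fun_prop)).bddAbove

lemma expectation_le_upperExp (hP : IsCompact P) (f : Ω → ℝ) {p : Ω → ℝ} (hp : p ∈ P) :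
    ∑ ω, p ω * f ω ≤ upperExp P f :=
  le_csSup (bddAbove_image_expectation hP f) ⟨p, hp, rfl⟩

lemma upperExp_zero (hP : P.Nonempty) : upperExp P 0 = 0 := by
  simp [upperExp, hP.image_const]

lemma upperExp_add_le (hne : P.Nonempty) (hP : IsCompact P) (f g : Ω → ℝ) :
    upperExp P (f + g) ≤ upperExp P f + upperExp P g := by
  refine csSup_le (hne.image _) ?_
  rintro _ ⟨p, hp, rfl⟩
  simp only [Pi.add_apply, mul_add, sum_add_distrib]
  exact add_le_add (expectation_le_upperExp hP f hp) (expectation_le_upperExp hP g hp)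

lemma upperExp_add_upperExp_neg_nonneg (hne : P.Nonempty) (hP : IsCompact P) (f : Ω → ℝ) :
    0 ≤ upperExp P f + upperExp P (-f) := by
  simpa [upperExp_zero hne] using upperExp_add_le hne hP f (-f)

lemma not_dominates_self (hP : P.Nonempty) (a : Ω → ℝ) : ¬ dominates P a a := by
  simp [dominates, upperExp_zero hP]

lemma upperExp_sub_pos_of_dominates (hne : P.Nonempty) (hP : IsCompact P) {a a' : Ω → ℝ}
    (h : dominates P a' a) : 0 < upperExp P (a' - a) := by
  have := upperExp_add_upperExp_neg_nonneg hne hP (a' - a)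
  rw [neg_sub] at this
  exact (lt_add_iff_pos_left _).1 (h.trans_le this)

lemma upperExp_sub_lt_of_dominates (hne : P.Nonempty) (hP : IsCompact P) {a a' : Ω → ℝ}
    (h : dominates P a' a) (c : Ω → ℝ) : upperExp P (c - a') < upperExp P (c - a) :=
  calc upperExp P (c - a') = upperExp P ((c - a) + (a - a')) := by rw [sub_add_sub_cancel]
    _ ≤ upperExp P (c - a) + upperExp P (a - a') := upperExp_add_le hne hP _ _
    _ < upperExp P (c - a) := add_lt_of_neg_right _ h

end UpperExpectation

section MaxMinLoss

variable {Ω : Type*} [Fintype Ω] [DecidableEq (Ω → ℝ)] {P : Set (Ω → ℝ)}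

lemma MmL_singleton (A : Finset (Ω → ℝ)) (b : Ω → ℝ) :
    MmL P {b} A = (A.erase b).sup fun c => ((upperExp P (c - b) : ℝ) : EReal) := by
  simp only [MmL, sdiff_singleton_eq_erase, inf_singleton]

lemma MmL_singleton_lt_of_dominates (hne : P.Nonempty) (hP : IsCompact P)
    {A : Finset (Ω → ℝ)} {a a' : Ω → ℝ} (ha' : a' ∈ A) (h : dominates P a' a) :
    MmL P {a'} A < MmL P {a} A := by
  have le_MmL : ∀ c ∈ A.erase a, ((upperExp P (c - a) : ℝ) : EReal) ≤ MmL P {a} A := by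
    rw [MmL_singleton A a]
    exact fun c hc => le_sup (f := fun c => ((upperExp P (c - a) : ℝ) : EReal)) hc
  have hne' : a' ≠ a := by
    rintro rfl
    exact not_dominates_self hne a' h
  have MmL_pos : (0 : EReal) < MmL P {a} A :=
    (EReal.coe_pos.2 (upperExp_sub_pos_of_dominates hne hP h)).trans_le
      (le_MmL a' (mem_erase.2 ⟨hne', ha'⟩))
  rw [MmL_singleton A a', Finset.sup_lt_iff (bot_le.trans_lt MmL_pos)]
  intro c hc
  by_cases hca : c = a
  · subst hca
    exact (EReal.coe_lt_coe_iff.2 h).trans MmL_pos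
  · exact (EReal.coe_lt_coe_iff.2 (upperExp_sub_lt_of_dominates hne hP h c)).trans_le
      (le_MmL c (mem_erase.2 ⟨hca, (mem_erase.1 hc).2⟩))

end MaxMinLoss

theorem stmt13_general {Ω : Type*} [Fintype Ω] [DecidableEq (Ω → ℝ)]
    (P : Set (Ω → ℝ)) (hP : IsCredal P)
    (A : Finset (Ω → ℝ)) (a : Ω → ℝ) (ha : a ∈ A)
    (hopt : ∀ b ∈ A, MmL P {a} A ≤ MmL P {b} A) :
    maximalIn P A a :=
  ⟨ha, fun a' ha' hdom =>
    (hopt a' ha').not_gt (MmL_singleton_lt_of_dominates hP.1 hP.2.1 ha' hdom)⟩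

theorem stmt13 {Ω : Type*} [Fintype Ω] [Nonempty Ω] [DecidableEq (Ω → ℝ)]
    (P : Set (Ω → ℝ)) (hP : IsCredal P)
    (A : Finset (Ω → ℝ)) (hA : A.Nonempty) (a : Ω → ℝ) (ha : a ∈ A)
    (hopt : ∀ b ∈ A, MmL P {a} A ≤ MmL P {b} A) :
    maximalIn P A a :=
  stmt13_general P hP A a ha hopt
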